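/- Let (X,d) be a metric space and 𝔅 a bornology on X with closed base. Suppose that for each sequence (𝒰_n) of 𝔅^s-covers of X there is a sequence (𝒱_n) with 𝒱_n ⊆ 𝒰_n, no 𝒱_n a 𝔅^s-cover of X, and ⋃_n 𝒱_n a 𝔅^s-cover of X. Then C(X,ℝ) with the topology τ^s_𝔅 is a selectively strictly A-space at the zero function. -/

import Mathlib

open Set Metric

variable {X : Type*} [MetricSpace X]

/-- The δ-enlargement of a set `B`: union of open δ-balls around points of `B`. -/
def enl (B : Set X) (δ : ℝ) : Set X := ⋃ b ∈ B, Metric.ball b δ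

/-- A bornology (in the sense of Hu/Hogbe-Nlend): a family of nonempty subsets
covering `X`, closed under finite unions and hereditary. -/
def IsBorn (𝔅 : Set (Set X)) : Prop :=
  (∀ B ∈ 𝔅, B.Nonempty) ∧ (⋃₀ 𝔅 = Set.univ) ∧
  (∀ B₁ ∈ 𝔅, ∀ B₂ ∈ 𝔅, B₁ ∪ B₂ ∈ 𝔅) ∧
  (∀ B ∈ 𝔅, ∀ A : Set X, A ⊆ B → A.Nonempty → A ∈ 𝔅)

/-- The bornology has a base consisting of closed sets. -/
def HasClosedBase (𝔅 : Set (Set X)) : Prop :=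
  ∃ 𝔅₀ ⊆ 𝔅, (∀ B ∈ 𝔅₀, IsClosed B) ∧ ∀ B ∈ 𝔅, ∃ B₀ ∈ 𝔅₀, B ⊆ B₀

/-- A strong 𝔅-cover (𝔅ˢ-cover): an open cover 𝒰 of X with X ∉ 𝒰 such that for
every `B ∈ 𝔅` some δ-enlargement of `B` lies in a member of 𝒰. -/
def IsBsCover (𝔅 : Set (Set X)) (𝒰 : Set (Set X)) : Prop :=
  (∀ U ∈ 𝒰, IsOpen U) ∧ Set.univ ∉ 𝒰 ∧ ⋃₀ 𝒰 = Set.univ ∧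
  ∀ B ∈ 𝔅, ∃ U ∈ 𝒰, ∃ δ > 0, enl B δ ⊆ U

/-- A γ_{𝔅ˢ}-cover: an infinite countable open cover `(U n)` such that for every
`B ∈ 𝔅` there are `n₀` and positive reals `δ n` (for `n ≥ n₀`) with
`enl B (δ n) ⊆ U n` for all `n ≥ n₀`. -/
def IsGammaCover (𝔅 : Set (Set X)) (U : ℕ → Set X) : Prop :=
  (∀ n, IsOpen (U n)) ∧ (⋃ n, U n) = Set.univ ∧ (Set.range U).Infinite ∧
  ∀ B ∈ 𝔅, ∃ n₀ : ℕ, ∃ δ : ℕ → ℝ, ∀ n ≥ n₀, 0 < δ n ∧ enl B (δ n) ⊆ U n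

/-- `g` belongs to the basic τˢ_𝔅-neighborhood `[B,ε]ˢ(f)`. -/
def SNbhd (B : Set X) (ε : ℝ) (f g : C(X, ℝ)) : Prop :=
  ∃ δ > 0, ∀ x ∈ enl B δ, |g x - f x| < ε

/-- `f` lies in the τˢ_𝔅-closure of `A`. -/
def SCl (𝔅 : Set (Set X)) (A : Set C(X, ℝ)) (f : C(X, ℝ)) : Prop :=
  ∀ B ∈ 𝔅, ∀ ε > 0, ∃ g ∈ A, SNbhd B ε f g

/-- The sequence `g` τˢ_𝔅-converges to `f`. -/
def SConv (𝔅 : Set (Set X)) (g : ℕ → C(X, ℝ)) (f : C(X, ℝ)) : Prop :=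
  ∀ B ∈ 𝔅, ∀ ε > 0, ∃ N : ℕ, ∀ n ≥ N, SNbhd B ε f (g n)

/-!
Put `smallSet ε g = {x | |g x| < ε}`. That `0` lies in the τˢ_𝔅-closure of `A` says exactly
that, for every `ε > 0`, the sets `smallSet ε g` with `g ∈ A` strongly cover every member of `𝔅`;
unless one of them is all of `X`, they form a 𝔅ˢ-cover. If infinitely many `A n` contain a
function that is uniformly below `1/(n+1)`, these functions alone converge uniformly to `0` and
singletons are taken for `T n`. Otherwise the covers `smallCover (1/(n+1)) (A n)` are eventually
𝔅ˢ-covers, and applying the selection hypothesis to each tail `n ≥ m` and recombining the finitely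
many selections that land at level `n` yields non-covers `𝒲 n` every tail of which still
strongly covers `𝔅`; `T n` consists of the `g ∈ A n` whose small set was selected.
-/

open Filter Topology

lemma enl_mono {B B' : Set X} (h : B ⊆ B') (δ : ℝ) : enl B δ ⊆ enl B' δ :=
  biUnion_subset_biUnion_left h

lemma mem_enl_self {B : Set X} {x : X} (hx : x ∈ B) {δ : ℝ} (hδ : 0 < δ) : x ∈ enl B δ :=
  mem_iUnion₂.mpr ⟨x, hx, mem_ball_self hδ⟩

lemma IsBorn.singleton_mem {α : Type*} {𝔅 : Set (Set α)} (h𝔅 : IsBorn 𝔅) (x : α) : {x} ∈ 𝔅 := by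
  obtain ⟨B, hB, hxB⟩ : x ∈ ⋃₀ 𝔅 := h𝔅.2.1 ▸ mem_univ x
  exact h𝔅.2.2.2 B hB {x} (singleton_subset_iff.mpr hxB) (singleton_nonempty x)

def SCovers (𝔅 𝒰 : Set (Set X)) : Prop :=
  ∀ B ∈ 𝔅, ∃ U ∈ 𝒰, ∃ δ > 0, enl B δ ⊆ U

def HasSplitSelection (𝔅 : Set (Set X)) : Prop :=
  ∀ 𝒰 : ℕ → Set (Set X), (∀ n, IsBsCover 𝔅 (𝒰 n)) →
    ∃ 𝒱 : ℕ → Set (Set X), (∀ n, 𝒱 n ⊆ 𝒰 n) ∧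
      (∀ n, ¬ IsBsCover 𝔅 (𝒱 n)) ∧ IsBsCover 𝔅 (⋃ n, 𝒱 n)

section Covers

variable {𝔅 : Set (Set X)}

lemma SCovers.mono {𝒱 𝒲 : Set (Set X)} (h𝒱 : SCovers 𝔅 𝒱) (h : 𝒱 ⊆ 𝒲) : SCovers 𝔅 𝒲 :=
  fun B hB ↦ let ⟨U, hU, hBU⟩ := h𝒱 B hB; ⟨U, h hU, hBU⟩

lemma not_sCovers_empty (h𝔅 : 𝔅.Nonempty) : ¬ SCovers 𝔅 ∅ := fun h ↦ by
  obtain ⟨B, hB⟩ := h𝔅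
  obtain ⟨U, hU, -⟩ := h B hB
  exact hU

lemma not_sCovers_union (h𝔅 : IsBorn 𝔅) {𝒱 𝒲 : Set (Set X)} (h𝒱 : ¬ SCovers 𝔅 𝒱)
    (h𝒲 : ¬ SCovers 𝔅 𝒲) : ¬ SCovers 𝔅 (𝒱 ∪ 𝒲) := by
  unfold SCovers at *
  push Not at *
  obtain ⟨B, hB, hB𝒱⟩ := h𝒱
  obtain ⟨C, hC, hC𝒲⟩ := h𝒲
  refine ⟨B ∪ C, h𝔅.2.2.1 B hB C hC, ?_⟩
  rintro U (hU | hU) δ hδ hsub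
  · exact hB𝒱 U hU δ hδ ((enl_mono subset_union_left δ).trans hsub)
  · exact hC𝒲 U hU δ hδ ((enl_mono subset_union_right δ).trans hsub)

lemma not_sCovers_biUnion (h𝔅 : IsBorn 𝔅) (h𝔅ne : 𝔅.Nonempty) {ι : Type*} {s : Set ι}
    (hs : s.Finite) {𝒱 : ι → Set (Set X)} (h : ∀ i ∈ s, ¬ SCovers 𝔅 (𝒱 i)) :
    ¬ SCovers 𝔅 (⋃ i ∈ s, 𝒱 i) := by
  induction s, hs using Finite.induction_on with
  | empty => simpa using not_sCovers_empty h𝔅ne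
  | @insert a s _ _ ih =>
    rw [biUnion_insert]
    exact not_sCovers_union h𝔅 (h a (mem_insert a s))
      (ih fun i hi ↦ h i (mem_insert_of_mem a hi))

lemma isBsCover_iff (h𝔅 : IsBorn 𝔅) {𝒰 : Set (Set X)} :
    IsBsCover 𝔅 𝒰 ↔ (∀ U ∈ 𝒰, IsOpen U) ∧ univ ∉ 𝒰 ∧ SCovers 𝔅 𝒰 := by
  refine ⟨fun ⟨hopen, huniv, _, hs⟩ ↦ ⟨hopen, huniv, hs⟩, fun ⟨hopen, huniv, hs⟩ ↦
    ⟨hopen, huniv, eq_univ_of_forall fun x ↦ ?_, hs⟩⟩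
  obtain ⟨U, hU, δ, hδ, hsub⟩ := hs {x} (h𝔅.singleton_mem x)
  exact ⟨U, hU, hsub (mem_enl_self (mem_singleton x) hδ)⟩

lemma IsBsCover.of_subset (h𝔅 : IsBorn 𝔅) {𝒰 𝒱 : Set (Set X)} (h𝒰 : IsBsCover 𝔅 𝒰)
    (h : 𝒱 ⊆ 𝒰) (h𝒱 : SCovers 𝔅 𝒱) : IsBsCover 𝔅 𝒱 :=
  (isBsCover_iff h𝔅).2 ⟨fun U hU ↦ h𝒰.1 U (h hU), fun hu ↦ h𝒰.2.1 (h hu), h𝒱⟩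

/-- If `𝔅 = ∅`, then `∅` is a 𝔅ˢ-cover whose only subfamily is itself. -/
lemma HasSplitSelection.nonempty (h𝔅 : IsBorn 𝔅) (hsel : HasSplitSelection 𝔅) : 𝔅.Nonempty := by
  by_contra hne
  have hcov : IsBsCover 𝔅 ∅ := (isBsCover_iff h𝔅).2
    ⟨by simp, notMem_empty _, by simp [not_nonempty_iff_eq_empty.mp hne, SCovers]⟩
  obtain ⟨𝒱, h𝒱, hnc, -⟩ := hsel (fun _ ↦ ∅) fun _ ↦ hcov
  exact hnc 0 (subset_empty_iff.mp (h𝒱 0) ▸ hcov)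

/-- The `m`-th selection is applied to the covers of index `≥ m + m₀`, so that every tail of
`⋃ n, 𝒲 n` contains a whole selection, while only the selections with `m + m₀ ≤ n` meet
`𝒲 n`. -/
lemma HasSplitSelection.exists_tail_sCovers (h𝔅 : IsBorn 𝔅) (hsel : HasSplitSelection 𝔅)
    {𝒰 : ℕ → Set (Set X)} (h𝒰 : ∀ᶠ n in atTop, IsBsCover 𝔅 (𝒰 n)) :
    ∃ 𝒲 : ℕ → Set (Set X), (∀ n, 𝒲 n ⊆ 𝒰 n) ∧ (∀ n, ¬ SCovers 𝔅 (𝒲 n)) ∧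
      ∀ N, SCovers 𝔅 (⋃ n ≥ N, 𝒲 n) := by
  obtain ⟨m₀, hm₀⟩ := eventually_atTop.mp h𝒰
  have hcov : ∀ m k, IsBsCover 𝔅 (𝒰 (m + m₀ + k)) := fun m k ↦ hm₀ _ (by omega)
  choose 𝒱 h𝒱𝒰 h𝒱nc h𝒱cov using fun m ↦ hsel (fun k ↦ 𝒰 (m + m₀ + k)) (hcov m)
  have h𝒱𝒰' : ∀ m n, m + m₀ ≤ n → 𝒱 m (n - (m + m₀)) ⊆ 𝒰 n := fun m n h ↦ by
    simpa only [Nat.add_sub_cancel' h] using h𝒱𝒰 m (n - (m + m₀))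
  refine ⟨fun n ↦ ⋃ m ∈ {m | m + m₀ ≤ n}, 𝒱 m (n - (m + m₀)), fun n ↦ ?_, fun n ↦ ?_, fun N ↦ ?_⟩
  · exact iUnion₂_subset fun m hm ↦ h𝒱𝒰' m n hm
  · refine not_sCovers_biUnion h𝔅 (hsel.nonempty h𝔅)
      ((finite_Iic n).subset fun m (hm : m + m₀ ≤ n) ↦ by simp only [mem_Iic]; omega)
      fun m hm h ↦ h𝒱nc m _ ((hcov m _).of_subset h𝔅 (h𝒱𝒰 m _) h)
  · refine SCovers.mono (h𝒱cov N).2.2.2 (iUnion_subset fun k U hU ↦ ?_)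
    simp only [mem_iUnion, mem_ofPred_eq]
    exact ⟨N + m₀ + k, by omega, N, by omega, by simpa using hU⟩

end Covers

def smallSet (ε : ℝ) (g : C(X, ℝ)) : Set X := {x | |g x| < ε}

def smallCover (ε : ℝ) (A : Set C(X, ℝ)) : Set (Set X) := smallSet ε '' A

section SmallSets

variable {𝔅 : Set (Set X)}

lemma isOpen_smallSet (ε : ℝ) (g : C(X, ℝ)) : IsOpen (smallSet ε g) :=
  isOpen_lt (continuous_abs.comp g.continuous) continuous_const

lemma smallSet_mono {ε η : ℝ} (h : ε ≤ η) (g : C(X, ℝ)) : smallSet ε g ⊆ smallSet η g :=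
  fun _ hx ↦ lt_of_lt_of_le hx h

lemma sNbhd_zero_iff {B : Set X} {ε : ℝ} {g : C(X, ℝ)} :
    SNbhd B ε 0 g ↔ ∃ δ > 0, enl B δ ⊆ smallSet ε g := by
  simp [SNbhd, smallSet, subset_def]

lemma not_sCl_empty (h𝔅 : 𝔅.Nonempty) (f : C(X, ℝ)) : ¬ SCl 𝔅 ∅ f := fun h ↦ by
  obtain ⟨B, hB⟩ := h𝔅
  obtain ⟨g, hg, -⟩ := h B hB 1 one_pos
  exact hg

lemma not_sCl_singleton (h𝔅 : IsBorn 𝔅) {g : C(X, ℝ)} (hg : g ≠ 0) : ¬ SCl 𝔅 {g} 0 := by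
  intro h
  obtain ⟨x, hx⟩ := DFunLike.ne_iff.mp hg
  obtain ⟨g', rfl, hsn⟩ := h {x} (h𝔅.singleton_mem x) |g x| (abs_pos.mpr hx)
  obtain ⟨δ, hδ, hsub⟩ := sNbhd_zero_iff.mp hsn
  exact lt_irrefl |g' x| (hsub (mem_enl_self (mem_singleton x) hδ))

lemma isBsCover_smallCover (h𝔅 : IsBorn 𝔅) {ε : ℝ} (hε : 0 < ε) {A : Set C(X, ℝ)}
    (hA : SCl 𝔅 A 0) (hsmall : ∀ g ∈ A, smallSet ε g ≠ univ) :
    IsBsCover 𝔅 (smallCover ε A) := by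
  refine (isBsCover_iff h𝔅).2 ⟨?_, fun ⟨g, hg, h⟩ ↦ hsmall g hg h, fun B hB ↦ ?_⟩
  · rintro _ ⟨g, -, rfl⟩
    exact isOpen_smallSet ε g
  · obtain ⟨g, hg, hsn⟩ := hA B hB ε hε
    exact ⟨_, mem_image_of_mem _ hg, sNbhd_zero_iff.mp hsn⟩

lemma exists_selection_of_frequently_small (h𝔅 : IsBorn 𝔅) (h𝔅ne : 𝔅.Nonempty) {ε : ℕ → ℝ}
    (hε : Tendsto ε atTop (𝓝 0)) {A : ℕ → Set C(X, ℝ)} (hA0 : ∀ n, (0 : C(X, ℝ)) ∉ A n)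
    (hfreq : ∃ᶠ n in atTop, ∃ g ∈ A n, smallSet (ε n) g = univ) :
    ∃ T : ℕ → Set C(X, ℝ), (∀ n, T n ⊆ A n) ∧
      SCl 𝔅 (⋃ n, T n) 0 ∧ ∀ n, ¬ SCl 𝔅 (T n) 0 := by
  classical
  set P : ℕ → Prop := fun n ↦ ∃ g ∈ A n, smallSet (ε n) g = univ
  choose! g hgA hg using fun n (h : P n) ↦ h
  refine ⟨fun n ↦ if P n then {g n} else ∅, fun n ↦ ?_, fun B hB η hη ↦ ?_, fun n ↦ ?_⟩
  · dsimp only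
    split_ifs with h
    · exact singleton_subset_iff.mpr (hgA n h)
    · exact empty_subset _
  · obtain ⟨n, hn, hεn⟩ := (hfreq.and_eventually (hε.eventually (gt_mem_nhds hη))).exists
    have hgT : g n ∈ ⋃ n, if P n then {g n} else ∅ :=
      mem_iUnion.mpr ⟨n, by simp only [if_pos (show P n from hn), mem_singleton_iff]⟩
    refine ⟨g n, hgT, sNbhd_zero_iff.mpr ⟨1, one_pos, ?_⟩⟩
    exact (subset_univ _).trans ((hg n hn).symm.subset.trans (smallSet_mono hεn.le (g n)))
  · dsimp only
    split_ifs with h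
    · exact not_sCl_singleton h𝔅 fun h0 ↦ hA0 n (h0 ▸ hgA n h)
    · exact not_sCl_empty h𝔅ne 0

lemma exists_selection_of_tail_sCovers {ε : ℕ → ℝ} (hεpos : ∀ n, 0 < ε n)
    (hε : Tendsto ε atTop (𝓝 0)) {A : ℕ → Set C(X, ℝ)} {𝒲 : ℕ → Set (Set X)}
    (h𝒲 : ∀ n, 𝒲 n ⊆ smallCover (ε n) (A n)) (hnc : ∀ n, ¬ SCovers 𝔅 (𝒲 n))
    (htail : ∀ N, SCovers 𝔅 (⋃ n ≥ N, 𝒲 n)) :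
    ∃ T : ℕ → Set C(X, ℝ), (∀ n, T n ⊆ A n) ∧
      SCl 𝔅 (⋃ n, T n) 0 ∧ ∀ n, ¬ SCl 𝔅 (T n) 0 := by
  refine ⟨fun n ↦ {g ∈ A n | smallSet (ε n) g ∈ 𝒲 n}, fun n ↦ sep_subset _ _,
    fun B hB η hη ↦ ?_, fun n hcl ↦ hnc n fun B hB ↦ ?_⟩
  · obtain ⟨N, hN⟩ := eventually_atTop.mp (hε.eventually (gt_mem_nhds hη))
    obtain ⟨U, hU, δ, hδ, hsub⟩ := htail N B hB
    simp only [mem_iUnion] at hU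
    obtain ⟨n, hn, hU⟩ := hU
    obtain ⟨g, hg, rfl⟩ := h𝒲 n hU
    exact ⟨g, mem_iUnion.mpr ⟨n, hg, hU⟩,
      sNbhd_zero_iff.mpr ⟨δ, hδ, hsub.trans (smallSet_mono (hN n hn).le g)⟩⟩
  · obtain ⟨g, ⟨-, hg𝒲⟩, hsn⟩ := hcl B hB (ε n) (hεpos n)
    exact ⟨_, hg𝒲, sNbhd_zero_iff.mp hsn⟩

end SmallSets

theorem statement18_general (𝔅 : Set (Set X)) (h𝔅 : IsBorn 𝔅)
    (hsel : ∀ 𝒰 : ℕ → Set (Set X), (∀ n, IsBsCover 𝔅 (𝒰 n)) →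
      ∃ 𝒱 : ℕ → Set (Set X), (∀ n, 𝒱 n ⊆ 𝒰 n) ∧
        (∀ n, ¬ IsBsCover 𝔅 (𝒱 n)) ∧ IsBsCover 𝔅 (⋃ n, 𝒱 n)) :
    ∀ A : ℕ → Set C(X, ℝ),
      (∀ n, SCl 𝔅 (A n) 0 ∧ (0 : C(X, ℝ)) ∉ A n) →
      ∃ T : ℕ → Set C(X, ℝ), (∀ n, T n ⊆ A n) ∧
        SCl 𝔅 (⋃ n, T n) 0 ∧ ∀ n, ¬ SCl 𝔅 (T n) 0 := by
  intro A hA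
  have hsel : HasSplitSelection 𝔅 := hsel
  set ε : ℕ → ℝ := fun n ↦ 1 / ((n : ℝ) + 1)
  have hεpos : ∀ n, 0 < ε n := fun n ↦ Nat.one_div_pos_of_nat
  have hε : Tendsto ε atTop (𝓝 0) := tendsto_one_div_add_atTop_nhds_zero_nat
  by_cases hfreq : ∃ᶠ n in atTop, ∃ g ∈ A n, smallSet (ε n) g = univ
  · exact exists_selection_of_frequently_small h𝔅 (hsel.nonempty h𝔅) hε (fun n ↦ (hA n).2) hfreq
  · have hcov : ∀ᶠ n in atTop, IsBsCover 𝔅 (smallCover (ε n) (A n)) :=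
      (not_frequently.mp hfreq).mono fun n hn ↦
        isBsCover_smallCover h𝔅 (hεpos n) (hA n).1 fun g hg h ↦ hn ⟨g, hg, h⟩
    obtain ⟨𝒲, h𝒲, hnc, htail⟩ := hsel.exists_tail_sCovers h𝔅 hcov
    exact exists_selection_of_tail_sCovers hεpos hε h𝒲 hnc htail

theorem statement18 (𝔅 : Set (Set X)) (h𝔅 : IsBorn 𝔅) (hcb : HasClosedBase 𝔅)
    (hsel : ∀ 𝒰 : ℕ → Set (Set X), (∀ n, IsBsCover 𝔅 (𝒰 n)) →
      ∃ 𝒱 : ℕ → Set (Set X), (∀ n, 𝒱 n ⊆ 𝒰 n) ∧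
        (∀ n, ¬ IsBsCover 𝔅 (𝒱 n)) ∧ IsBsCover 𝔅 (⋃ n, 𝒱 n)) :
    ∀ A : ℕ → Set C(X, ℝ),
      (∀ n, SCl 𝔅 (A n) 0 ∧ (0 : C(X, ℝ)) ∉ A n) →
      ∃ T : ℕ → Set C(X, ℝ), (∀ n, T n ⊆ A n) ∧
        SCl 𝔅 (⋃ n, T n) 0 ∧ ∀ n, ¬ SCl 𝔅 (T n) 0 :=
  statement18_general 𝔅 h𝔅 hsel
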